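/- Let g be an element of a finite semigroup with index t and period r, and let x = g^a for some a ≥ t lying in the cycle of g. If s = (−t) mod r and ℓ is the discrete logarithm of x to base g^{t+s+1} in the cyclic group C = {g^{t+j} : 0 ≤ j < r}, i.e., (g^{t+s+1})^ℓ = x with identity (g^{t+s+1})^0 := g^{t+s}, then a ≡ t + s + ℓ (mod r). Consequently the least exponent a' with g^{a'} = x equals t + ((s + ℓ) mod r). -/

import Mathlib

/-!
For `n ≥ t` the powers `g^n` form the orbit of `g^t` under right multiplication by `g`, and `g^t`
is a periodic point of that map with minimal period `r`; so two exponents `≥ t` give the same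
power exactly when they are congruent mod `r`. Since `r ∣ t + s`, the exponent
`t + s + ℓ (t + s + 1)` of `(g^{t+s+1})^ℓ` is congruent to `t + s + ℓ`. Every exponent of `x` is
at least `t` by minimality of the index, and the least one in its residue class is `t + ((s + ℓ) mod r)`.
-/

/-- `spow g n` is `g^n` for `n ≥ 1` in a semigroup. -/
def spow {S : Type*} [Semigroup S] (g : S) (n : ℕ) : S := (· * g)^[n - 1] g

open Function

theorem Function.iterate_eq_iterate_iff_modEq_minimalPeriod {α : Type*} {f : α → α} {x : α}
    (hx : x ∈ periodicPts f) {m n : ℕ} : f^[m] x = f^[n] x ↔ m ≡ n [MOD minimalPeriod f x] := by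
  have hpos := minimalPeriod_pos_of_mem_periodicPts hx
  rw [← iterate_mod_minimalPeriod_eq (n := m), ← iterate_mod_minimalPeriod_eq (n := n),
    iterate_eq_iterate_iff_of_lt_minimalPeriod (Nat.mod_lt _ hpos) (Nat.mod_lt _ hpos)]
  rfl

section

variable {S : Type*} [Semigroup S]

theorem spow_add_eq_iterate (g : S) {m : ℕ} (hm : 1 ≤ m) (j : ℕ) :
    spow g (m + j) = (· * g)^[j] (spow g m) := by
  unfold spow
  rw [← iterate_add_apply]
  congr 2
  omega

theorem minimalPeriod_spow_of_isLeast {g : S} {t r : ℕ} (ht : 1 ≤ t)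
    (hr : IsLeast {j : ℕ | 1 ≤ j ∧ spow g t = spow g (t + j)} r) :
    minimalPeriod (· * g) (spow g t) = r := by
  have hper : IsPeriodicPt (· * g) r (spow g t) := by
    rw [IsPeriodicPt, IsFixedPt, ← spow_add_eq_iterate g ht, ← hr.1.2]
  refine le_antisymm (hper.minimalPeriod_le hr.1.1) (hr.2 ⟨hper.minimalPeriod_pos hr.1.1, ?_⟩)
  rw [spow_add_eq_iterate g ht, iterate_minimalPeriod]

theorem spow_eq_spow_iff_modEq {g : S} {t r a b : ℕ} (ht : 1 ≤ t)
    (hr : IsLeast {j : ℕ | 1 ≤ j ∧ spow g t = spow g (t + j)} r) (ha : t ≤ a) (hb : t ≤ b) :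
    spow g a = spow g b ↔ a ≡ b [MOD r] := by
  obtain ⟨i, rfl⟩ := Nat.exists_eq_add_of_le ha
  obtain ⟨j, rfl⟩ := Nat.exists_eq_add_of_le hb
  have hperiodic : spow g t ∈ periodicPts (· * g) := by
    rw [← minimalPeriod_pos_iff_mem_periodicPts, minimalPeriod_spow_of_isLeast ht hr]
    exact hr.1.1
  rw [spow_add_eq_iterate g ht, spow_add_eq_iterate g ht,
    iterate_eq_iterate_iff_modEq_minimalPeriod hperiodic, minimalPeriod_spow_of_isLeast ht hr]
  exact ⟨fun h => h.add_left t, Nat.ModEq.add_left_cancel' t⟩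

end

theorem semigroup_dlog_formula_general {S : Type*} [Semigroup S] (g x : S) (t r s a ℓ : ℕ)
    (ht : IsLeast {j : ℕ | 1 ≤ j ∧ ∃ k, j < k ∧ spow g j = spow g k} t)
    (hr : IsLeast {j : ℕ | 1 ≤ j ∧ spow g t = spow g (t + j)} r)
    (hs : s < r ∧ (t + s) % r = 0)
    (ha : t ≤ a) (hx : x = spow g a)
    (hℓ : x = spow g (t + s + ℓ * (t + s + 1))) :
    a ≡ t + s + ℓ [MOD r] ∧
    IsLeast {a' : ℕ | 1 ≤ a' ∧ spow g a' = x} (t + (s + ℓ) % r) := by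
  have ht1 : 1 ≤ t := ht.1.1
  have hcycle {b c : ℕ} (hb : t ≤ b) (hc : t ≤ c) : spow g b = spow g c ↔ b ≡ c [MOD r] :=
    spow_eq_spow_iff_modEq ht1 hr hb hc
  have hdlog : t + s + ℓ * (t + s + 1) ≡ t + s + ℓ [MOD r] := by
    have hzero : ℓ * (t + s) ≡ 0 [MOD r] :=
      Nat.modEq_zero_iff_dvd.2 (Dvd.dvd.mul_left (Nat.dvd_of_mod_eq_zero hs.2) ℓ)
    calc t + s + ℓ * (t + s + 1) = t + s + ℓ + ℓ * (t + s) := by ring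
      _ ≡ t + s + ℓ + 0 [MOD r] := hzero.add_left _
  have hmod : a ≡ t + s + ℓ [MOD r] := ((hcycle ha (by omega)).1 (hx ▸ hℓ)).trans hdlog
  have hleast : t + (s + ℓ) % r ≡ a [MOD r] :=
    ((Nat.mod_modEq (s + ℓ) r).add_left t).trans (by rw [← add_assoc]; exact hmod.symm)
  refine ⟨hmod, ⟨by omega, hx ▸ (hcycle (by omega) ha).2 hleast⟩, ?_⟩
  rintro a' ⟨ha'1, ha'x⟩
  have hta' : t ≤ a' := by
    rcases lt_or_ge a' a with hlt | hle
    · exact ht.2 ⟨ha'1, a, hlt, ha'x.trans hx⟩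
    · omega
  refine (hleast.trans ((hcycle hta' ha).1 (ha'x.trans hx)).symm).le_of_lt_add ?_
  have := Nat.mod_lt (s + ℓ) hr.1.1
  omega

/-- If `x = g^a` is in the cycle and `ℓ` is the discrete log of `x` to base `g^{t+s+1}`
in the cycle group (with `(g^{t+s+1})^0 := g^{t+s}`, so `(g^{t+s+1})^ℓ = g^{t+s+ℓ(t+s+1)}`),
then `a ≡ t+s+ℓ (mod r)`, and the least exponent giving `x` is `t + ((s+ℓ) mod r)`. -/
theorem semigroup_dlog_formula {S : Type*} [Semigroup S] [Finite S] (g x : S) (t r s a ℓ : ℕ)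
    (ht : IsLeast {j : ℕ | 1 ≤ j ∧ ∃ k, j < k ∧ spow g j = spow g k} t)
    (hr : IsLeast {j : ℕ | 1 ≤ j ∧ spow g t = spow g (t + j)} r)
    (hs : s < r ∧ (t + s) % r = 0)
    (ha : t ≤ a) (hx : x = spow g a)
    (hℓ : x = spow g (t + s + ℓ * (t + s + 1))) :
    a ≡ t + s + ℓ [MOD r] ∧
    IsLeast {a' : ℕ | 1 ≤ a' ∧ spow g a' = x} (t + (s + ℓ) % r) :=
  semigroup_dlog_formula_general g x t r s a ℓ ht hr hs ha hx hℓ
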